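/- arXiv:1604.07690 — 3 statements merged into one kernel-verified Lean document; each statement's English description precedes it below -/
import Mathlib

section
/- Let (y_n) be a sequence of non-negative reals with y_n → 0, let α ∈ (0,1), and suppose ∑_{n=1}^∞ exp(−α ∑_{k=1}^n y_k) < ∞. Set β := 2α/(1+α) and x_n := ∏_{k=1}^n (1+β y_k)⁻¹. Then ∑_{n=1}^∞ x_n < ∞. -/
/-!
Since `β > α`, the bound `log (1 + β t) ≥ β t / (1 + β t) ≥ α t` holds for all small `t ≥ 0`,
so eventually `(1 + β y k)⁻¹ ≤ exp (-α y k)`. Past that point the factors of `x n` are dominated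
by those of `exp (-α ∑ y k)`, hence `x n` is at most a constant times the summable majorant.
-/

open Filter Finset Real

lemma inv_one_add_mul_le_exp_neg_mul {α β t : ℝ} (hβ : 0 < β) (ht : 0 ≤ t)
    (h : α * (1 + β * t) ≤ β) : (1 + β * t)⁻¹ ≤ exp (-(α * t)) := by
  have hpos : 0 < 1 + β * t := by positivity
  have hlog : α * t ≤ log (1 + β * t) :=
    calc α * t ≤ β * t / (1 + β * t) := by
          rw [le_div_iff₀ hpos, mul_right_comm]
          exact mul_le_mul_of_nonneg_right h ht
      _ = 1 - (1 + β * t)⁻¹ := by field_simp; ring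
      _ ≤ log (1 + β * t) := one_sub_inv_le_log_of_pos hpos
  rw [exp_neg]
  exact inv_anti₀ (exp_pos _) ((le_log_iff_exp_le hpos).mp hlog)

lemma summable_prod_Icc_of_eventually_le {f g : ℕ → ℝ} (hf : ∀ k, 0 ≤ f k) (hg : ∀ k, 0 < g k)
    (hfg : ∀ᶠ k in atTop, f k ≤ g k) (hs : Summable fun n ↦ ∏ k ∈ Icc 1 n, g k) :
    Summable fun n ↦ ∏ k ∈ Icc 1 n, f k := by
  obtain ⟨N, hN⟩ := eventually_atTop.mp hfg
  set C := (∏ k ∈ Icc 1 N, f k) / ∏ k ∈ Icc 1 N, g k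
  refine (hs.mul_left C).of_norm_bounded_eventually_nat ?_
  filter_upwards [eventually_ge_atTop N] with n hn
  have hsplit (u : ℕ → ℝ) : ∏ k ∈ Icc 1 n, u k = (∏ k ∈ Icc 1 N, u k) * ∏ k ∈ Ioc N n, u k :=
    (prod_Ioc_consecutive u N.zero_le hn).symm
  have htail : ∏ k ∈ Ioc N n, f k ≤ ∏ k ∈ Ioc N n, g k :=
    prod_le_prod (fun k _ ↦ hf k) fun k hk ↦ hN k (mem_Ioc.mp hk).1.le
  have hgN : 0 < ∏ k ∈ Icc 1 N, g k := prod_pos fun k _ ↦ hg k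
  rw [Real.norm_of_nonneg (prod_nonneg fun k _ ↦ hf k), hsplit, hsplit g, ← mul_assoc,
    div_mul_cancel₀ _ hgN.ne']
  exact mul_le_mul_of_nonneg_left htail (prod_nonneg fun k _ ↦ hf k)

theorem summable_x (y : ℕ → ℝ) (hy : ∀ n, 0 ≤ y n)
    (hy0 : Filter.Tendsto y Filter.atTop (nhds 0))
    (α : ℝ) (hα : α ∈ Set.Ioo (0 : ℝ) 1)
    (hsum : Summable fun n => Real.exp (-α * ∑ k ∈ Finset.Icc 1 n, y k))
    (β : ℝ) (hβ : β = 2 * α / (1 + α))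
    (x : ℕ → ℝ) (hx : ∀ n, x n = ∏ k ∈ Finset.Icc 1 n, (1 + β * y k)⁻¹) :
    Summable x := by
  obtain ⟨hα0, hα1⟩ := hα
  have hαβ : α < β := by rw [hβ, lt_div_iff₀ (by linarith)]; nlinarith
  have hβ0 : 0 < β := hα0.trans hαβ
  have hfactor : ∀ᶠ k in atTop, (1 + β * y k)⁻¹ ≤ exp (-(α * y k)) := by
    have hlim : Tendsto (fun k ↦ α * (1 + β * y k)) atTop (nhds α) := by
      simpa using ((hy0.const_mul β).const_add 1).const_mul α
    filter_upwards [hlim.eventually_lt_const hαβ] with k hk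
    exact inv_one_add_mul_le_exp_neg_mul hβ0 (hy k) hk.le
  have hexp : (fun n ↦ exp (-α * ∑ k ∈ Icc 1 n, y k)) =
      fun n ↦ ∏ k ∈ Icc 1 n, exp (-(α * y k)) := by
    funext n
    rw [← exp_sum, mul_sum]
    simp only [neg_mul]
  rw [show x = _ from funext hx]
  have hfactor_nonneg (k : ℕ) : 0 ≤ (1 + β * y k)⁻¹ :=
    inv_nonneg.2 (add_nonneg zero_le_one (mul_nonneg hβ0.le (hy k)))
  exact summable_prod_Icc_of_eventually_le hfactor_nonneg (fun k ↦ exp_pos _) hfactor (hexp ▸ hsum)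
end

section
/- Let (y_n) be a sequence of non-negative reals with y_n → 0, let α ∈ (0,1), and suppose ∑_{n=1}^∞ exp(−α ∑_{k=1}^n y_k) < ∞. Set β := 2α/(1+α) and x_n := ∏_{k=1}^n (1+β y_k)⁻¹. Then for every n ≥ 1, x_n < ∑_{k=n+1}^∞ x_k y_k < ∞. -/
/-!
Since `x (k + 1) * (1 + β * y (k + 1)) = x k`, we have `β * x (k + 1) * y (k + 1) = x k - x (k + 1)`,
so `β * ∑_{k > n} x k * y k` telescopes to `x n - lim x`. Summability of `exp (-α * ∑_{k ≤ n} y k)`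
forces `∑ y k = ∞`, hence `x n ≤ (1 + β * ∑_{k ≤ n} y k)⁻¹ → 0`, and the tail sum equals
`x n / β > x n` because `0 < β < 1`.
-/

open Filter Topology Finset

theorem one_add_sum_le_prod_one_add {ι R : Type*} [CommSemiring R] [PartialOrder R]
    [IsOrderedRing R] (s : Finset ι) {a : ι → R} (ha : ∀ i ∈ s, 0 ≤ a i) :
    1 + ∑ i ∈ s, a i ≤ ∏ i ∈ s, (1 + a i) := by
  classical
  induction s using Finset.induction_on with
  | empty => simp
  | insert i s hi ih =>
    rw [sum_insert hi, prod_insert hi]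
    have hai := ha i (mem_insert_self i s)
    have hs := ih fun j hj => ha j (mem_insert_of_mem hj)
    calc 1 + (a i + ∑ j ∈ s, a j)
        ≤ 1 + (a i + ∑ j ∈ s, a j) + a i * ∑ j ∈ s, a j :=
          le_add_of_nonneg_right
            (mul_nonneg hai (sum_nonneg fun j hj => ha j (mem_insert_of_mem hj)))
      _ = (1 + a i) * (1 + ∑ j ∈ s, a j) := by ring
      _ ≤ (1 + a i) * ∏ j ∈ s, (1 + a j) := by gcongr; exact add_nonneg zero_le_one hai

theorem hasSum_sub_succ_of_antitone {f : ℕ → ℝ} (hf : Antitone f)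
    (hf0 : Tendsto f atTop (𝓝 0)) : HasSum (fun k => f k - f (k + 1)) (f 0) := by
  rw [hasSum_iff_tendsto_nat_of_nonneg (fun k => sub_nonneg.mpr (hf k.le_succ))]
  simp only [sum_range_sub']
  simpa using tendsto_const_nhds.sub hf0

theorem tendsto_atTop_of_summable_exp_neg_mul {s : ℕ → ℝ} {α : ℝ} (hα : 0 < α)
    (h : Summable fun n => Real.exp (-α * s n)) : Tendsto s atTop atTop := by
  have hbot : Tendsto (fun n => -α * s n) atTop atBot :=
    Real.tendsto_exp_comp_nhds_zero.mp h.tendsto_atTop_zero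
  refine (hbot.atBot_mul_const_of_neg (neg_lt_zero.mpr (inv_pos.mpr hα))).congr fun n => ?_
  field_simp

/-- The paper's `x n` for the weights `a k = β * y k`. -/
noncomputable def invProd (a : ℕ → ℝ) (n : ℕ) : ℝ := ∏ k ∈ Icc 1 n, (1 + a k)⁻¹

namespace invProd

variable {a : ℕ → ℝ}

theorem pos (ha : ∀ k, 0 ≤ a k) (n : ℕ) : 0 < invProd a n :=
  prod_pos fun k _ => inv_pos.mpr (by linarith [ha k])

theorem sub_succ (ha : ∀ k, 0 ≤ a k) (n : ℕ) :
    invProd a n - invProd a (n + 1) = invProd a (n + 1) * a (n + 1) := by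
  have h1 : 1 + a (n + 1) ≠ 0 := by linarith [ha (n + 1)]
  rw [invProd, invProd, prod_Icc_succ_top (by omega)]
  field_simp
  ring

theorem antitone (ha : ∀ k, 0 ≤ a k) : Antitone (invProd a) :=
  antitone_nat_of_succ_le fun n => by
    linarith [sub_succ ha n, mul_nonneg (pos ha (n + 1)).le (ha (n + 1))]

theorem le_inv_one_add_sum (ha : ∀ k, 0 ≤ a k) (n : ℕ) :
    invProd a n ≤ (1 + ∑ k ∈ Icc 1 n, a k)⁻¹ := by
  rw [invProd, prod_inv_distrib]
  exact inv_anti₀ (by linarith [sum_nonneg fun k (_ : k ∈ Icc 1 n) => ha k])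
    (one_add_sum_le_prod_one_add _ fun k _ => ha k)

theorem tendsto_zero (ha : ∀ k, 0 ≤ a k)
    (hS : Tendsto (fun n => ∑ k ∈ Icc 1 n, a k) atTop atTop) :
    Tendsto (invProd a) atTop (𝓝 0) :=
  squeeze_zero (fun n => (pos ha n).le) (le_inv_one_add_sum ha)
    (tendsto_inv_atTop_zero.comp (tendsto_atTop_add_const_left _ 1 hS))

theorem hasSum_tail (ha : ∀ k, 0 ≤ a k)
    (hS : Tendsto (fun n => ∑ k ∈ Icc 1 n, a k) atTop atTop) (n : ℕ) :
    HasSum (fun k => invProd a (k + (n + 1)) * a (k + (n + 1))) (invProd a n) := by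
  have h := hasSum_sub_succ_of_antitone (f := fun k => invProd a (k + n))
    (fun i j hij => antitone ha (by omega))
    ((tendsto_zero ha hS).comp (tendsto_add_atTop_nat n))
  rw [zero_add] at h
  convert h using 2 with k
  rw [add_right_comm, sub_succ ha, add_assoc]

end invProd

theorem verification_lemma_general (y : ℕ → ℝ) (hy : ∀ n, 0 ≤ y n)
    (α : ℝ) (hα : α ∈ Set.Ioo (0 : ℝ) 1)
    (hsum : Summable fun n => Real.exp (-α * ∑ k ∈ Finset.Icc 1 n, y k))
    (β : ℝ) (hβ : β = 2 * α / (1 + α))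
    (x : ℕ → ℝ) (hx : ∀ n, x n = ∏ k ∈ Finset.Icc 1 n, (1 + β * y k)⁻¹) :
    ∀ n ≥ 1, (Summable fun k => x (k + (n + 1)) * y (k + (n + 1))) ∧
      x n < ∑' k : ℕ, x (k + (n + 1)) * y (k + (n + 1)) := by
  obtain ⟨hα0, hα1⟩ := hα
  have hβ0 : 0 < β := by rw [hβ]; positivity
  have hβ1 : β < 1 := by rw [hβ, div_lt_one (by linarith)]; linarith
  have hβy : ∀ k, 0 ≤ β * y k := fun k => mul_nonneg hβ0.le (hy k)
  obtain rfl : x = invProd fun k => β * y k := funext hx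
  have hS : Tendsto (fun n => ∑ k ∈ Icc 1 n, β * y k) atTop atTop := by
    simp only [← mul_sum]
    exact (tendsto_atTop_of_summable_exp_neg_mul hα0 hsum).const_mul_atTop hβ0
  intro n _
  have htail : HasSum (fun k => invProd (fun k => β * y k) (k + (n + 1)) * y (k + (n + 1)))
      (invProd (fun k => β * y k) n / β) := by
    rw [← hasSum_mul_left_iff hβ0.ne', mul_div_cancel₀ _ hβ0.ne']
    simpa only [mul_left_comm β] using invProd.hasSum_tail hβy hS n
  refine ⟨htail.summable, ?_⟩
  rw [htail.tsum_eq, lt_div_iff₀ hβ0]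
  exact mul_lt_of_lt_one_right (invProd.pos hβy n) hβ1

theorem verification_lemma (y : ℕ → ℝ) (hy : ∀ n, 0 ≤ y n)
    (hy0 : Filter.Tendsto y Filter.atTop (nhds 0))
    (α : ℝ) (hα : α ∈ Set.Ioo (0 : ℝ) 1)
    (hsum : Summable fun n => Real.exp (-α * ∑ k ∈ Finset.Icc 1 n, y k))
    (β : ℝ) (hβ : β = 2 * α / (1 + α))
    (x : ℕ → ℝ) (hx : ∀ n, x n = ∏ k ∈ Finset.Icc 1 n, (1 + β * y k)⁻¹) :
    ∀ n ≥ 1, (Summable fun k => x (k + (n + 1)) * y (k + (n + 1))) ∧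
      x n < ∑' k : ℕ, x (k + (n + 1)) * y (k + (n + 1)) :=
  verification_lemma_general y hy α hα hsum β hβ x hx
end

section
/- Let B = (B_t)_{t∈[0,1]} be a standard Brownian motion, σ > 0, γ ∈ (0,1), and define ξ_n := (σ B_{n^{−γ}} − σ B_{(n+1)^{−γ}})⁺ for n ≥ 1. Then for every α > 0, E[∑_{n=1}^∞ exp(−α ∑_{k=1}^n ξ_k)] < ∞. -/
/-!
Each `ξ k` is `σ` times the positive part of a centred Gaussian of variance
`v k = k^(-γ) - (k+1)^(-γ)`, and the `ξ k` are independent, so `E exp(-α ∑_{k ≤ n} ξ k)` factors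
into a product of Laplace transforms. A standard Gaussian exceeds `1` with some probability
`q > 0`, so each factor is at most `exp(-c √(v k))`, and the mean value theorem gives
`√(v k) ≥ √γ (k+1)^(-(1+γ)/2)`. Hence the `n`-th term of the series is at most
`exp(-C n^((1-γ)/2))`, which is summable because `γ < 1`.
-/

open MeasureTheory ProbabilityTheory

/-- `B` is a standard Brownian motion under `μ`: continuous paths, `B 0 = 0` a.s.,
Gaussian increments with the correct variance, and independent increments. -/
structure IsBrownianMotion {Ω : Type*} [MeasurableSpace Ω] (μ : Measure Ω)
    (B : ℝ → Ω → ℝ) : Prop where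
  isProb : IsProbabilityMeasure μ
  init : ∀ᵐ ω ∂μ, B 0 ω = 0
  cont : ∀ ω, Continuous fun t => B t ω
  meas : ∀ t, Measurable (B t)
  incr : ∀ s t : ℝ, 0 ≤ s → s ≤ t →
    Measure.map (fun ω => B t ω - B s ω) μ = gaussianReal 0 ((t - s).toNNReal)
  indep : ∀ (n : ℕ) (t : ℕ → ℝ), StrictMono t → 0 ≤ t 0 →
    iIndepFun
      (fun i : Fin n => fun ω => B (t (i + 1)) ω - B (t i) ω) μ

open Real
open scoped NNReal

lemma measureReal_gaussianReal_Ici_one_pos : 0 < (gaussianReal 0 1).real (Set.Ici (1 : ℝ)) := by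
  refine ENNReal.toReal_pos (fun h => ?_) (measure_ne_top _ _)
  simpa using gaussianReal_absolutelyContinuous' 0 one_ne_zero h

lemma gaussianReal_Ici_sqrt {v : ℝ≥0} (hv : v ≠ 0) :
    gaussianReal 0 v (Set.Ici √v) = gaussianReal 0 1 (Set.Ici 1) := by
  have hsv : 0 < √(v : ℝ) := Real.sqrt_pos.2 (by positivity)
  have hmap : (gaussianReal 0 1).map (√(v : ℝ) * ·) = gaussianReal 0 v := by
    rw [gaussianReal_map_const_mul]
    congr 1
    · ring
    · ext; simp
  rw [← hmap, Measure.map_apply (by fun_prop) measurableSet_Ici]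
  have hpre : (fun x => √(v : ℝ) * x) ⁻¹' Set.Ici √(v : ℝ) = Set.Ici 1 := by
    ext x
    simpa using mul_le_mul_iff_right₀ (b := 1) (c := x) hsv
  rw [hpre]

lemma integral_exp_neg_le_exp_neg_mul_measureReal {α : Type*} [MeasurableSpace α]
    {ν : Measure α} [IsProbabilityMeasure ν] {f : α → ℝ} (hf : ∀ x, 0 ≤ f x)
    {S : Set α} (hS : MeasurableSet S) {a : ℝ} (haS : ∀ x ∈ S, a ≤ f x) :
    ∫ x, exp (-f x) ∂ν ≤ exp (-((1 - exp (-a)) * ν.real S)) := by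
  have hpt : ∀ x, exp (-f x) ≤ 1 - S.indicator (fun _ => 1 - exp (-a)) x := by
    intro x
    by_cases hx : x ∈ S
    · simpa [hx] using haS x hx
    · simpa [hx] using hf x
  calc ∫ x, exp (-f x) ∂ν
      ≤ ∫ x, (1 - S.indicator (fun _ => 1 - exp (-a)) x) ∂ν :=
        integral_mono_of_nonneg (.of_forall fun x => (exp_pos _).le)
          ((integrable_const 1).sub ((integrable_const _).indicator hS)) (.of_forall hpt)
    _ = 1 - (1 - exp (-a)) * ν.real S := by
        rw [integral_sub (integrable_const 1) ((integrable_const _).indicator hS),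
          integral_const, integral_indicator_const _ hS]
        simp [mul_comm]
    _ ≤ exp (-((1 - exp (-a)) * ν.real S)) := one_sub_le_exp_neg _

lemma mul_exp_neg_le_one_sub_exp_neg (x : ℝ) : x * exp (-x) ≤ 1 - exp (-x) := by
  have h := mul_le_mul_of_nonneg_right (add_one_le_exp x) (exp_pos (-x)).le
  rw [← exp_add, add_neg_cancel, exp_zero] at h
  linarith

lemma integral_exp_neg_mul_posPart_gaussianReal_le {t : ℝ} (ht : 0 ≤ t) {v : ℝ≥0}
    (hv : v ≠ 0) (hv1 : v ≤ 1) :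
    ∫ x, exp (-(t * max x 0)) ∂gaussianReal 0 v
      ≤ exp (-((gaussianReal 0 1).real (Set.Ici 1) * t * exp (-t) * √v)) := by
  set q := (gaussianReal 0 1).real (Set.Ici (1 : ℝ))
  have hsv1 : √(v : ℝ) ≤ 1 := sqrt_le_one.2 (by exact_mod_cast hv1)
  have hq : (gaussianReal 0 v).real (Set.Ici √v) = q := by
    simp only [measureReal_def, gaussianReal_Ici_sqrt hv, q]
  have hbound := integral_exp_neg_le_exp_neg_mul_measureReal (ν := gaussianReal 0 v)
    (f := fun x => t * max x 0) (fun x => by positivity) measurableSet_Ici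
    (a := t * √v) (fun x hx => mul_le_mul_of_nonneg_left (le_max_of_le_left hx) ht)
  refine hbound.trans (exp_le_exp.2 (neg_le_neg ?_))
  have hlin : t * √v * exp (-t) ≤ 1 - exp (-(t * √v)) :=
    (mul_le_mul_of_nonneg_left (exp_le_exp.2 (by nlinarith)) (by positivity)).trans
      (mul_exp_neg_le_one_sub_exp_neg _)
  calc q * t * exp (-t) * √v = q * (t * √v * exp (-t)) := by ring
    _ ≤ q * (1 - exp (-(t * √v))) := mul_le_mul_of_nonneg_left hlin measureReal_nonneg
    _ = (1 - exp (-(t * √v))) * (gaussianReal 0 v).real (Set.Ici √v) := by rw [hq, mul_comm]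

lemma mul_add_one_rpow_le_rpow_neg_sub_rpow_neg {γ x : ℝ} (hγ : 0 < γ) (hx : 0 < x) :
    γ * (x + 1) ^ (-γ - 1) ≤ x ^ (-γ) - (x + 1) ^ (-γ) := by
  obtain ⟨c, ⟨hxc, hc1⟩, hc⟩ := exists_hasDerivAt_eq_slope (fun y : ℝ => y ^ (-γ))
    (fun y => -γ * y ^ (-γ - 1)) (lt_add_one x)
    (continuousOn_id.rpow_const fun y hy => Or.inl (hx.trans_le hy.1).ne')
    (fun y hy => hasDerivAt_rpow_const (Or.inl (hx.trans hy.1).ne'))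
  have hmono : (x + 1) ^ (-γ - 1) ≤ c ^ (-γ - 1) :=
    rpow_le_rpow_of_nonpos (hx.trans hxc) hc1.le (by linarith)
  simp only [add_sub_cancel_left, div_one] at hc
  nlinarith

lemma le_sum_sqrt_rpow_neg_sub {γ : ℝ} (hγ : 0 < γ) {m : ℕ} (hm : 0 < m) :
    √γ * 2 ^ (-((γ + 1) / 2)) * (m : ℝ) ^ ((1 - γ) / 2)
      ≤ ∑ i ∈ Finset.range m, √(((i : ℝ) + 1) ^ (-γ) - (((i + 1 : ℕ) : ℝ) + 1) ^ (-γ)) := by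
  have hm0 : (0 : ℝ) < m := by exact_mod_cast hm
  have hterm : ∀ i ∈ Finset.range m, √γ * (2 * m : ℝ) ^ (-((γ + 1) / 2))
      ≤ √(((i : ℝ) + 1) ^ (-γ) - (((i + 1 : ℕ) : ℝ) + 1) ^ (-γ)) := by
    intro i hi
    have him : (i : ℝ) + 1 + 1 ≤ 2 * m := by
      have : (i : ℝ) + 1 ≤ m := by exact_mod_cast Finset.mem_range.1 hi
      linarith
    calc √γ * (2 * m : ℝ) ^ (-((γ + 1) / 2))
        ≤ √γ * ((i : ℝ) + 1 + 1) ^ (-((γ + 1) / 2)) := by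
          gcongr ?_ * ?_
          exact rpow_le_rpow_of_nonpos (by positivity) him (by linarith)
      _ = √(γ * ((i : ℝ) + 1 + 1) ^ (-γ - 1)) := by
          rw [sqrt_mul hγ.le, sqrt_eq_rpow (_ ^ _), ← rpow_mul (by positivity)]
          ring_nf
      _ ≤ √(((i : ℝ) + 1) ^ (-γ) - (((i + 1 : ℕ) : ℝ) + 1) ^ (-γ)) := by
          push_cast
          exact sqrt_le_sqrt (mul_add_one_rpow_le_rpow_neg_sub_rpow_neg hγ (by positivity))
  calc √γ * 2 ^ (-((γ + 1) / 2)) * (m : ℝ) ^ ((1 - γ) / 2)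
      = ∑ _i ∈ Finset.range m, √γ * (2 * m : ℝ) ^ (-((γ + 1) / 2)) := by
        rw [Finset.sum_const, Finset.card_range, nsmul_eq_mul, mul_rpow zero_le_two hm0.le,
          show (1 - γ) / 2 = 1 + -((γ + 1) / 2) by ring, rpow_add hm0, rpow_one]
        ring
    _ ≤ _ := Finset.sum_le_sum hterm

lemma summable_exp_neg_mul_rpow {C δ : ℝ} (hC : 0 < C) (hδ : 0 < δ) :
    Summable fun n : ℕ => exp (-(C * (n : ℝ) ^ δ)) := by
  have h := ((isLittleO_exp_neg_mul_rpow_atTop hC (-2 / δ)).isBigO.comp_tendsto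
    ((tendsto_rpow_atTop hδ).comp tendsto_natCast_atTop_atTop))
  refine summable_of_isBigO_nat (Real.summable_nat_rpow.2 (by norm_num : (-2 : ℝ) < -1)) ?_
  refine (h.congr_left fun n => by simp).congr_right fun n => ?_
  simp only [Function.comp_apply]
  rw [← rpow_mul (Nat.cast_nonneg n), mul_div_cancel₀ _ hδ.ne']

lemma Finset.sum_Icc_one_eq_sum_range {M : Type*} [AddCommMonoid M] (f : ℕ → M) (n : ℕ) :
    ∑ k ∈ Finset.Icc 1 n, f k = ∑ i ∈ Finset.range n, f (i + 1) := by
  rw [Finset.range_eq_Ico, Finset.sum_Ico_add' f 0 n 1, ← Finset.Ico_add_one_right_eq_Icc]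

namespace IsBrownianMotion

variable {Ω : Type*} [MeasurableSpace Ω] {μ : Measure Ω} {B : ℝ → Ω → ℝ}

lemma mgf_mul_posPart_increment_le (hB : IsBrownianMotion μ B) {s t : ℝ} (hs : 0 ≤ s)
    (hst : s < t) (hts : t - s ≤ 1) {σ α : ℝ} (hσ : 0 ≤ σ) (hα : 0 ≤ α) :
    mgf (fun ω => σ * max (B t ω - B s ω) 0) μ (-α)
      ≤ exp (-((gaussianReal 0 1).real (Set.Ici 1) * (α * σ) * exp (-(α * σ)) * √(t - s))) := by
  have hv : (t - s).toNNReal ≠ 0 := by simpa using hst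
  have hmgf : mgf (fun ω => σ * max (B t ω - B s ω) 0) μ (-α)
      = ∫ x, exp (-((α * σ) * max x 0)) ∂gaussianReal 0 (t - s).toNNReal := by
    rw [← hB.incr s t hs hst.le, integral_map (φ := fun ω => B t ω - B s ω)
      ((hB.meas t).sub (hB.meas s)).aemeasurable (by fun_prop)]
    simp only [mgf, neg_mul, mul_assoc]
  have h := integral_exp_neg_mul_posPart_gaussianReal_le (mul_nonneg hα hσ) hv
    (by simpa using hts)
  rwa [Real.coe_toNNReal _ (sub_nonneg.2 hst.le), ← hmgf] at h

lemma iIndepFun_increments_of_strictAnti (hB : IsBrownianMotion μ B) {τ : ℕ → ℝ}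
    (hτ : StrictAnti τ) (hτ0 : ∀ i, 0 ≤ τ i) (m : ℕ) :
    iIndepFun (fun (i : Fin m) ω => B (τ i) ω - B (τ (i + 1)) ω) μ := by
  set t : ℕ → ℝ := fun j => τ (m - j) + ((j - m : ℕ) : ℝ)
  have ht : StrictMono t := by
    refine strictMono_nat_of_lt_succ fun j => ?_
    rcases lt_or_ge j m with hj | hj
    · have h1 : j + 1 - m = j - m := by omega
      have h2 : τ (m - j) < τ (m - (j + 1)) := hτ (by omega)
      simp only [t, h1]
      linarith
    · have h1 : m - (j + 1) = m - j := by omega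
      have h2 : j + 1 - m = j - m + 1 := by omega
      simp only [t, h1, h2]
      push_cast
      linarith
  -- `indep` speaks of increasing times indexed by all of `ℕ`: read `τ` backwards from `m`,
  -- then continue with unit steps.
  refine (iIndepFun_precomp_of_bijective Fin.rev_bijective).1 ?_
  convert hB.indep m t ht (by simp [t, hτ0]) using 3 with i ω
  have h1 : m - (i + 1) + 1 = m - i := by omega
  have h2 : (i : ℕ) + 1 - m = 0 := by omega
  simp [t, h1, h2]

lemma lintegral_exp_neg_sum_posPart_increments_le (hB : IsBrownianMotion μ B) {τ : ℕ → ℝ}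
    (hτ : StrictAnti τ) (hτ0 : ∀ i, 0 ≤ τ i) (hτ1 : τ 0 ≤ 1) {σ α : ℝ} (hσ : 0 ≤ σ)
    (hα : 0 ≤ α) (m : ℕ) :
    ∫⁻ ω, ENNReal.ofReal
        (exp (-α * ∑ i ∈ Finset.range m, σ * max (B (τ i) ω - B (τ (i + 1)) ω) 0)) ∂μ
      ≤ ENNReal.ofReal (exp (-((gaussianReal 0 1).real (Set.Ici 1) * (α * σ) * exp (-(α * σ))
          * ∑ i ∈ Finset.range m, √(τ i - τ (i + 1))))) := by
  have := hB.isProb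
  have hBm := hB.meas
  set c := (gaussianReal 0 1).real (Set.Ici (1 : ℝ)) * (α * σ) * exp (-(α * σ))
  set X : ℕ → Ω → ℝ := fun i ω => σ * max (B (τ i) ω - B (τ (i + 1)) ω) 0
  have hX : ∀ i, Measurable (X i) := fun i => by fun_prop
  have hindep : iIndepFun (fun i : Fin m => X i) μ :=
    (hB.iIndepFun_increments_of_strictAnti hτ hτ0 m).comp (fun _ x => σ * max x 0)
      (fun _ => by fun_prop)
  have hint : Integrable (fun ω => exp (-α * ∑ i ∈ Finset.range m, X i ω)) μ := by
    refine .of_bound (by fun_prop) 1 (.of_forall fun ω => ?_)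
    have : 0 ≤ ∑ i ∈ Finset.range m, X i ω := Finset.sum_nonneg fun i _ => by positivity
    rw [norm_of_nonneg (exp_pos _).le, exp_le_one_iff]
    nlinarith
  rw [← ofReal_integral_eq_lintegral_ofReal hint (.of_forall fun _ => (exp_pos _).le)]
  refine ENNReal.ofReal_le_ofReal ?_
  calc ∫ ω, exp (-α * ∑ i ∈ Finset.range m, X i ω) ∂μ = mgf (∑ i : Fin m, X i) μ (-α) := by
        unfold mgf
        congr with ω
        simp only [Finset.sum_apply, Fin.sum_univ_eq_sum_range (fun i => X i ω)]
    _ = ∏ i : Fin m, mgf (X i) μ (-α) := hindep.mgf_sum (fun i => hX i) _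
    _ ≤ ∏ i : Fin m, exp (-(c * √(τ i - τ (i + 1)))) :=
        Finset.prod_le_prod (fun _ _ => mgf_nonneg) fun i _ =>
          hB.mgf_mul_posPart_increment_le (hτ0 _) (hτ (Nat.lt_succ_self i))
            (by linarith [hτ.antitone (Nat.zero_le i), hτ0 (i + 1)]) hσ hα
    _ = exp (-(c * ∑ i ∈ Finset.range m, √(τ i - τ (i + 1)))) := by
        rw [Fin.prod_univ_eq_prod_range (fun i => exp (-(c * √(τ i - τ (i + 1))))),
          ← exp_sum, Finset.mul_sum, Finset.sum_neg_distrib]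

lemma exists_lintegral_exp_neg_sum_le_exp_neg_rpow (hB : IsBrownianMotion μ B) {σ γ : ℝ}
    (hσ : 0 < σ) (hγ : 0 < γ) {ξ : ℕ → Ω → ℝ}
    (hξ : ∀ n : ℕ, ∀ ω, ξ n ω =
      max (σ * B ((n : ℝ) ^ (-γ)) ω - σ * B (((n : ℝ) + 1) ^ (-γ)) ω) 0)
    {α : ℝ} (hα : 0 < α) :
    ∃ C > 0, ∀ n : ℕ, 0 < n →
      ∫⁻ ω, ENNReal.ofReal (exp (-α * ∑ k ∈ Finset.Icc 1 n, ξ k ω)) ∂μ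
        ≤ ENNReal.ofReal (exp (-(C * (n : ℝ) ^ ((1 - γ) / 2)))) := by
  set τ : ℕ → ℝ := fun i => ((i : ℝ) + 1) ^ (-γ)
  have hτ : StrictAnti τ := fun i j hij =>
    rpow_lt_rpow_of_neg (by positivity) (by simpa using hij) (by linarith)
  have hξτ : ∀ i ω, ξ (i + 1) ω = σ * max (B (τ i) ω - B (τ (i + 1)) ω) 0 := fun i ω => by
    rw [hξ, ← mul_sub, mul_max_of_nonneg _ _ hσ.le, mul_zero]
    simp only [τ, Nat.cast_add, Nat.cast_one]
  set c := (gaussianReal 0 1).real (Set.Ici (1 : ℝ)) * (α * σ) * exp (-(α * σ))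
  have hc : 0 < c := by have := measureReal_gaussianReal_Ici_one_pos; positivity
  refine ⟨c * (√γ * 2 ^ (-((γ + 1) / 2))), by have := sqrt_pos.2 hγ; positivity, fun n hn => ?_⟩
  simp_rw [Finset.sum_Icc_one_eq_sum_range, hξτ]
  refine (hB.lintegral_exp_neg_sum_posPart_increments_le hτ (fun i => by positivity)
    (by simp [τ]) hσ.le hα.le n).trans (ENNReal.ofReal_le_ofReal (exp_le_exp.2 (neg_le_neg ?_)))
  rw [mul_assoc]
  exact mul_le_mul_of_nonneg_left (le_sum_sqrt_rpow_neg_sub hγ hn) hc.le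

end IsBrownianMotion

/-- Lemma 2.2: `E [∑ₙ exp (-α ∑_{k=1}^n ξ_k)] < ∞`, where
`ξ_n = (σ B_{n^{-γ}} - σ B_{(n+1)^{-γ}})⁺`. -/
theorem brownian_exp_sum_integrable {Ω : Type*} [MeasurableSpace Ω] (μ : Measure Ω)
    (B : ℝ → Ω → ℝ) (hB : IsBrownianMotion μ B)
    (σ : ℝ) (hσ : 0 < σ) (γ : ℝ) (hγ : γ ∈ Set.Ioo (0 : ℝ) 1)
    (ξ : ℕ → Ω → ℝ)
    (hξ : ∀ n : ℕ, ∀ ω, ξ n ω =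
      max (σ * B ((n : ℝ) ^ (-γ)) ω - σ * B (((n : ℝ) + 1) ^ (-γ)) ω) 0) :
    ∀ α : ℝ, 0 < α →
      (∫⁻ ω, ∑' n : ℕ,
        ENNReal.ofReal (Real.exp (-α * ∑ k ∈ Finset.Icc 1 (n + 1), ξ k ω)) ∂μ) < ⊤ := by
  intro α hα
  obtain ⟨C, hC, hbound⟩ := hB.exists_lintegral_exp_neg_sum_le_exp_neg_rpow hσ hγ.1 hξ hα
  have hξm : ∀ k, Measurable (ξ k) := fun k => by
    have := hB.meas
    rw [funext (hξ k)]
    fun_prop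
  rw [lintegral_tsum fun n => by fun_prop]
  calc ∑' n : ℕ, ∫⁻ ω, ENNReal.ofReal (exp (-α * ∑ k ∈ Finset.Icc 1 (n + 1), ξ k ω)) ∂μ
      ≤ ∑' n : ℕ, ENNReal.ofReal (exp (-(C * ((n + 1 : ℕ) : ℝ) ^ ((1 - γ) / 2)))) :=
        ENNReal.tsum_le_tsum fun n => hbound (n + 1) n.succ_pos
    _ = ENNReal.ofReal (∑' n : ℕ, exp (-(C * ((n + 1 : ℕ) : ℝ) ^ ((1 - γ) / 2)))) :=
        (ENNReal.ofReal_tsum_of_nonneg (fun n => (exp_pos _).le)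
          ((summable_nat_add_iff 1).2 (summable_exp_neg_mul_rpow hC (by linarith [hγ.2])))).symm
    _ < ⊤ := ENNReal.ofReal_lt_top
end
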